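/- arXiv:0811.3390 — 2 statements merged into one kernel-verified Lean document; each statement's English description precedes it below -/
import Mathlib

section
/- Let a and b be coprime integers with 0 < a < b, β ∈ ℂ, k ∈ {0,1,…,a−1}, and let s ≥ b/a be a real number. Let f, h : ℕ → ℂ be sequences satisfying the recurrence h_{m+1} · ((k+a(m+1))! / (k+am)!) = ((β − bk)/a − bm)_b · h_m − f_m for all m ∈ ℕ. If there exist C̃, D̃ > 0 with |f_m| ≤ C̃ · D̃^m · ((k+am)!)^{s−1} for all m, then there exist C, D > 0 with |h_m| ≤ C · D^m · ((k+am)!)^{s−1} for all m. -/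
/-! Divide by the weight `w m = ((k + a m)!) ^ (s - 1)`. Its ratio `w (m+1) / w m` is `q ^ (s - 1)`
with `q = (k + a (m+1))! / (k + a m)! ≥ (m + 1) ^ a`, while the Pochhammer coefficient grows like
`(m + 1) ^ b ≤ q ^ s` because `b ≤ a s`. Hence `v m = ‖h m‖ / w m` satisfies
`v (m+1) ≤ A v m + C̃ D̃ ^ m`, and such a linear recursive inequality only allows geometric
growth. -/

lemma norm_descPochhammer_eval_le {R : Type*} [SeminormedRing R] [NormOneClass R]
    (n : ℕ) (z : R) : ‖(descPochhammer R n).eval z‖ ≤ (‖z‖ + n) ^ n := by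
  induction n with
  | zero => simp
  | succ n ih =>
    have hfactor : ‖z - n‖ ≤ ‖z‖ + (n + 1 : ℕ) := by
      calc ‖z - n‖ ≤ ‖z‖ + ‖(n : R)‖ := norm_sub_le _ _
        _ ≤ ‖z‖ + (n + 1 : ℕ) := by
          gcongr
          simpa using (Nat.norm_cast_le (α := R) n).trans (by simp)
    rw [descPochhammer_succ_eval, pow_succ]
    refine (norm_mul_le _ _).trans
      (mul_le_mul (ih.trans ?_) hfactor (norm_nonneg _) (by positivity))
    gcongr
    simp

lemma norm_descPochhammer_eval_sub_natCast_mul_le {R : Type*} [SeminormedRing R]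
    [NormOneClass R] (n m : ℕ) (c : R) :
    ‖(descPochhammer R n).eval (c - n * m)‖ ≤ (‖c‖ + n) ^ n * ((m + 1 : ℕ) : ℝ) ^ n := by
  rw [← mul_pow]
  refine (norm_descPochhammer_eval_le n _).trans (pow_le_pow_left₀ (by positivity) ?_ n)
  have : ‖(n * m : R)‖ ≤ n * m := by
    simpa using (norm_mul_le (n : R) m).trans
      (mul_le_mul (Nat.norm_cast_le n) (Nat.norm_cast_le m) (norm_nonneg _) (by simp))
  calc ‖c - n * m‖ + n ≤ ‖c‖ + n * m + n := by gcongr; exact (norm_sub_le _ _).trans (by gcongr)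
    _ ≤ (‖c‖ + n) * ((m + 1 : ℕ) : ℝ) := by push_cast; nlinarith [norm_nonneg c]

theorem Nat.succ_pow_le_factorial_div (n a : ℕ) :
    (n + 1) ^ a ≤ (n + a).factorial / n.factorial := by
  rw [← Nat.ascFactorial_eq_div]
  exact Nat.pow_succ_le_ascFactorial _ _

lemma exists_pow_bound_of_le_mul_add_mul_pow {v : ℕ → ℝ} {A B c : ℝ} (hA : 0 ≤ A) (hc : 0 ≤ c)
    (hv : ∀ m, v (m + 1) ≤ A * v m + B * c ^ m) :
    ∃ C D : ℝ, 0 < C ∧ 0 < D ∧ ∀ m, v m ≤ C * D ^ m := by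
  refine ⟨|v 0| + |B| + 1, A + c + 1, by positivity, by positivity, fun m ↦ ?_⟩
  induction m with
  | zero => simp only [pow_zero, mul_one]; linarith [le_abs_self (v 0), abs_nonneg B]
  | succ m ih =>
    have hcD : c ^ m ≤ (A + c + 1) ^ m := pow_le_pow_left₀ hc (by linarith) m
    calc v (m + 1) ≤ A * v m + B * c ^ m := hv m
      _ ≤ A * ((|v 0| + |B| + 1) * (A + c + 1) ^ m) + (|v 0| + |B| + 1) * (A + c + 1) ^ m := by
        gcongr A * ?_ + ?_
        calc B * c ^ m ≤ |B| * c ^ m := by gcongr; exact le_abs_self B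
          _ ≤ (|v 0| + |B| + 1) * (A + c + 1) ^ m := by gcongr; linarith [abs_nonneg (v 0)]
      _ ≤ (|v 0| + |B| + 1) * (A + c + 1) ^ (m + 1) := by
        rw [pow_succ]; nlinarith [show 0 ≤ (|v 0| + |B| + 1) * (A + c + 1) ^ m by positivity]

lemma norm_div_rpow_le_of_mul_natCast_eq {𝕜 : Type*} [RCLike 𝕜] {x' x y P : 𝕜} {q : ℕ}
    {A F s : ℝ} (heq : x' * q = P * x - y) (hq : 0 < q) (hF : 0 < F) (hs : 0 ≤ s)
    (hP : ‖P‖ ≤ A * (q : ℝ) ^ s) :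
    ‖x'‖ / (F * q) ^ (s - 1) ≤ A * (‖x‖ / F ^ (s - 1)) + ‖y‖ / F ^ (s - 1) := by
  have hq0 : (0 : ℝ) < q := by exact_mod_cast hq
  have hqs : 1 ≤ (q : ℝ) ^ s := Real.one_le_rpow (by exact_mod_cast hq) hs
  have hnorm : ‖x'‖ * q ≤ A * (q : ℝ) ^ s * ‖x‖ + ‖y‖ := by
    calc ‖x'‖ * q = ‖P * x - y‖ := by rw [← heq, norm_mul, RCLike.norm_natCast]
      _ ≤ ‖P‖ * ‖x‖ + ‖y‖ := (norm_sub_le _ _).trans (by rw [norm_mul])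
      _ ≤ A * (q : ℝ) ^ s * ‖x‖ + ‖y‖ := by gcongr
  have hweight : (F * q) ^ (s - 1) = F ^ (s - 1) * (q : ℝ) ^ s / q := by
    rw [Real.mul_rpow hF.le hq0.le, Real.rpow_sub_one hq0.ne', mul_div_assoc]
  have hFs : 0 < F ^ (s - 1) := Real.rpow_pos_of_pos hF _
  rw [hweight, div_div_eq_mul_div, div_le_iff₀ (by positivity)]
  calc ‖x'‖ * q ≤ A * (q : ℝ) ^ s * ‖x‖ + ‖y‖ := hnorm
    _ ≤ A * (q : ℝ) ^ s * ‖x‖ + ‖y‖ * (q : ℝ) ^ s := by gcongr; nlinarith [norm_nonneg y]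
    _ = (A * (‖x‖ / F ^ (s - 1)) + ‖y‖ / F ^ (s - 1)) * (F ^ (s - 1) * (q : ℝ) ^ s) := by
      field_simp

lemma succ_pow_le_factorial_div_rpow {a b : ℕ} {s : ℝ} (ha : 0 < a) (hs : (b : ℝ) / a ≤ s)
    (k m : ℕ) :
    ((m + 1 : ℕ) : ℝ) ^ b ≤
      (((k + a * (m + 1)).factorial / (k + a * m).factorial : ℕ) : ℝ) ^ s := by
  have hs0 : 0 ≤ s := (div_nonneg (Nat.cast_nonneg b) (Nat.cast_nonneg a)).trans hs
  have hbs : (b : ℝ) ≤ a * s := by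
    rwa [div_le_iff₀ (by exact_mod_cast ha), mul_comm] at hs
  have hpow : (m + 1) ^ a ≤ (k + a * (m + 1)).factorial / (k + a * m).factorial := by
    calc (m + 1) ^ a ≤ (k + a * m + 1) ^ a := by
          gcongr; nlinarith
      _ ≤ _ := by rw [mul_add_one, ← add_assoc]; exact Nat.succ_pow_le_factorial_div _ _
  calc ((m + 1 : ℕ) : ℝ) ^ b = ((m + 1 : ℕ) : ℝ) ^ (b : ℝ) := (Real.rpow_natCast _ _).symm
    _ ≤ ((m + 1 : ℕ) : ℝ) ^ ((a : ℝ) * s) :=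
      Real.rpow_le_rpow_of_exponent_le (by simp) hbs
    _ = ((((m + 1) ^ a : ℕ)) : ℝ) ^ s := by rw [Real.rpow_mul (by positivity)]; norm_cast
    _ ≤ _ := by gcongr

theorem recurrence_preserves_gevrey_growth_general
    (a b : ℕ) (ha : 0 < a)
    (β : ℂ) (k : ℕ) (s : ℝ) (hs : (b : ℝ) / (a : ℝ) ≤ s)
    (f h : ℕ → ℂ)
    (hrec : ∀ m : ℕ,
      h (m + 1) * (((k + a * (m + 1)).factorial / (k + a * m).factorial : ℕ) : ℂ) =
        (descPochhammer ℂ b).eval ((β - (b : ℂ) * (k : ℂ)) / (a : ℂ) - (b : ℂ) * (m : ℂ)) * h m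
          - f m)
    (hf : ∃ Ct Dt : ℝ, 0 < Ct ∧ 0 < Dt ∧
      ∀ m : ℕ, ‖f m‖ ≤ Ct * Dt ^ m * (((k + a * m).factorial : ℝ)) ^ (s - 1)) :
    ∃ C D : ℝ, 0 < C ∧ 0 < D ∧
      ∀ m : ℕ, ‖h m‖ ≤ C * D ^ m * (((k + a * m).factorial : ℝ)) ^ (s - 1) := by
  obtain ⟨Ct, Dt, -, hDt, hfb⟩ := hf
  have hs0 : 0 ≤ s := (div_nonneg (Nat.cast_nonneg b) (Nat.cast_nonneg a)).trans hs
  set w : ℕ → ℝ := fun m ↦ ((k + a * m).factorial : ℝ) ^ (s - 1)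
  have hw : ∀ m, 0 < w m := fun m ↦ Real.rpow_pos_of_pos (by positivity) _
  set E := ‖(β - (b : ℂ) * (k : ℂ)) / (a : ℂ)‖ + b
  have hstep : ∀ m, ‖h (m + 1)‖ / w (m + 1) ≤ E ^ b * (‖h m‖ / w m) + Ct * Dt ^ m := by
    intro m
    have hfactor : ((k + a * (m + 1)).factorial : ℝ) =
        (k + a * m).factorial * ((k + a * (m + 1)).factorial / (k + a * m).factorial : ℕ) := by
      rw [← Nat.cast_mul, Nat.mul_div_cancel' (Nat.factorial_dvd_factorial (by nlinarith))]
    have hq : 0 < (k + a * (m + 1)).factorial / (k + a * m).factorial :=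
      Nat.div_pos (Nat.factorial_le (by nlinarith)) (Nat.factorial_pos _)
    have hF : (0 : ℝ) < (k + a * m).factorial := by exact_mod_cast Nat.factorial_pos _
    have hP := (norm_descPochhammer_eval_sub_natCast_mul_le b m
      ((β - (b : ℂ) * (k : ℂ)) / (a : ℂ))).trans
      (mul_le_mul_of_nonneg_left (succ_pow_le_factorial_div_rpow ha hs k m) (by positivity))
    have hnorm := norm_div_rpow_le_of_mul_natCast_eq (hrec m) hq hF hs0 hP
    rw [← hfactor] at hnorm
    exact hnorm.trans (by gcongr; exact (div_le_iff₀ (hw m)).2 (hfb m))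
  obtain ⟨C, D, hC, hD, hbound⟩ :=
    exists_pow_bound_of_le_mul_add_mul_pow (v := fun m ↦ ‖h m‖ / w m) (by positivity) hDt.le hstep
  exact ⟨C, D, hC, hD, fun m ↦ (div_le_iff₀ (hw m)).1 (hbound m)⟩

/-- Gevrey growth propagates through the recurrence
`h_{m+1}·((k+a(m+1))!/(k+am)!) = ((β-bk)/a - bm)_b · h_m - f_m`: if `|f_m| ≤ C̃·D̃^m·((k+am)!)^{s-1}`
for some `C̃, D̃ > 0`, then `|h_m| ≤ C·D^m·((k+am)!)^{s-1}` for some `C, D > 0`, provided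
`s ≥ b/a`. -/
theorem recurrence_preserves_gevrey_growth
    (a b : ℕ) (hab : Nat.Coprime a b) (ha : 0 < a) (haltb : a < b)
    (β : ℂ) (k : ℕ) (hk : k < a) (s : ℝ) (hs : (b : ℝ) / (a : ℝ) ≤ s)
    (f h : ℕ → ℂ)
    (hrec : ∀ m : ℕ,
      h (m + 1) * (((k + a * (m + 1)).factorial / (k + a * m).factorial : ℕ) : ℂ) =
        (descPochhammer ℂ b).eval ((β - (b : ℂ) * (k : ℂ)) / (a : ℂ) - (b : ℂ) * (m : ℂ)) * h m
          - f m)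
    (hf : ∃ Ct Dt : ℝ, 0 < Ct ∧ 0 < Dt ∧
      ∀ m : ℕ, ‖f m‖ ≤ Ct * Dt ^ m * (((k + a * m).factorial : ℝ)) ^ (s - 1)) :
    ∃ C D : ℝ, 0 < C ∧ 0 < D ∧
      ∀ m : ℕ, ‖h m‖ ≤ C * D ^ m * (((k + a * m).factorial : ℝ)) ^ (s - 1) :=
  recurrence_preserves_gevrey_growth_general a b ha β k s hs f h hrec hf
end

section
/- Let a and b be coprime integers with 0 < a < b, let β ∈ ℂ and k ∈ {0,1,…,a−1} be such that (β − bk)/a ∉ ℕ, and let s be a real number with 1 ≤ s < b/a. Let f : ℕ → ℂ be a sequence such that |f_r| ≤ C · D^r · ((k+ar)!)^{s−1} for some C, D > 0 and all r ∈ ℕ. Then ((β − bk)/a)_{b(r+1)} ≠ 0 for every r ∈ ℕ, and the series Σ_{r≥0} (k+ar)! · f_r / ((β − bk)/a)_{b(r+1)} converges absolutely. -/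
/-!
Write `x = (β - bk)/a`. Since `x ∉ ℕ`, no factor of `(x)_n = ∏_{j<n} (x - j)` vanishes. The series
is dominated by `C · D^r ((k+ar)!)^s / |(x)_{b(r+1)}|`, and the ratio test applies: passing from
`r` to `r + 1` multiplies `((k+ar)!)^s` by at most `((k+a)(r+1))^{as}`, while, as soon as
`|x| ≤ b(r+1)/2`, the `b` new factors of the Pochhammer symbol each have modulus at least
`b(r+1)/2`. Hence the ratio is `O(r^{as-b})`, which tends to `0` because `as < b`.
-/

open Filter Topology Finset Polynomial
open scoped Nat

theorem summable_of_norm_succ_le_mul_of_tendsto_zero {E : Type*} [SeminormedAddCommGroup E]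
    [CompleteSpace E] {f : ℕ → E} {c : ℕ → ℝ} (hc : Tendsto c atTop (𝓝 0))
    (h : ∀ᶠ n in atTop, ‖f (n + 1)‖ ≤ c n * ‖f n‖) : Summable f := by
  refine summable_of_ratio_norm_eventually_le (r := 1 / 2) (by norm_num) ?_
  filter_upwards [h, hc.eventually (ge_mem_nhds (by norm_num : (0 : ℝ) < 1 / 2))] with n hn hcn
  exact hn.trans (mul_le_mul_of_nonneg_right hcn (norm_nonneg _))

theorem Nat.factorial_add_le_factorial_mul_pow (n m : ℕ) : (n + m)! ≤ n ! * (n + m) ^ m := by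
  rw [← Nat.factorial_mul_ascFactorial]
  exact Nat.mul_le_mul_left _ (Nat.ascFactorial_le_pow_add _ _)

section Pochhammer

variable {R : Type*} [CommRing R]

theorem descPochhammer_eval_ne_zero [IsDomain R] {x : R} (hx : ∀ j : ℕ, x ≠ j) (n : ℕ) :
    (descPochhammer R n).eval x ≠ 0 := by
  rw [descPochhammer_eval_eq_prod_range]
  exact prod_ne_zero_iff.2 fun j _ ↦ sub_ne_zero.2 (hx j)

theorem descPochhammer_eval_add (x : R) (m n : ℕ) :
    (descPochhammer R (m + n)).eval x =
      (descPochhammer R m).eval x * (descPochhammer R n).eval (x - m) := by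
  rw [← descPochhammer_mul, eval_mul, eval_comp]
  simp

end Pochhammer

section RCLike

variable {𝕜 : Type*} [RCLike 𝕜]

theorem pow_le_norm_descPochhammer_eval_sub {x : 𝕜} {m : ℕ}
    (hx : ‖x‖ ≤ m) (n : ℕ) : ((m : ℝ) - ‖x‖) ^ n ≤ ‖(descPochhammer 𝕜 n).eval (x - m)‖ := by
  rw [descPochhammer_eval_eq_prod_range, norm_prod, pow_eq_prod_const]
  refine prod_le_prod (fun _ _ ↦ sub_nonneg.2 hx) fun j _ ↦ ?_
  calc (m : ℝ) - ‖x‖ ≤ ‖((m + j : ℕ) : 𝕜)‖ - ‖x‖ := by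
        rw [RCLike.norm_natCast]; push_cast; linarith [(j.cast_nonneg : (0 : ℝ) ≤ j)]
    _ ≤ ‖x - m - j‖ := by
        rw [sub_sub, norm_sub_rev]; push_cast; exact norm_sub_norm_le _ _

theorem half_pow_mul_norm_descPochhammer_eval_le {x : 𝕜} {m : ℕ}
    (hx : ‖x‖ ≤ m / 2) (n : ℕ) :
    ((m : ℝ) / 2) ^ n * ‖(descPochhammer 𝕜 m).eval x‖ ≤ ‖(descPochhammer 𝕜 (m + n)).eval x‖ := by
  rw [descPochhammer_eval_add, norm_mul, mul_comm]
  gcongr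
  calc ((m : ℝ) / 2) ^ n ≤ ((m : ℝ) - ‖x‖) ^ n := by gcongr; linarith
    _ ≤ _ := pow_le_norm_descPochhammer_eval_sub (by linarith [norm_nonneg x]) n

end RCLike

theorem factorial_add_mul_succ_rpow_le (a k : ℕ) {s : ℝ} (hs : 0 ≤ s) (r : ℕ) :
    ((k + a * (r + 1))! : ℝ) ^ s ≤
      ((k + a * r)! : ℝ) ^ s * (((k + a : ℕ) : ℝ) * (r + 1)) ^ (a * s) := by
  have hnat : (k + a * (r + 1))! ≤ (k + a * r)! * ((k + a) * (r + 1)) ^ a :=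
    calc (k + a * (r + 1))! = (k + a * r + a)! := by ring_nf
      _ ≤ (k + a * r)! * (k + a * r + a) ^ a := Nat.factorial_add_le_factorial_mul_pow _ _
      _ ≤ _ := Nat.mul_le_mul_left _ (Nat.pow_le_pow_left (by nlinarith) _)
  calc ((k + a * (r + 1))! : ℝ) ^ s
      ≤ (((k + a * r)! : ℝ) * (((k + a : ℕ) : ℝ) * (r + 1)) ^ a) ^ s := by
        gcongr; exact_mod_cast hnat
    _ = _ := by
        rw [Real.mul_rpow (by positivity) (by positivity), ← Real.rpow_natCast,
          ← Real.rpow_mul (by positivity)]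

section GevreyMajorant

variable (a b k : ℕ) (s D : ℝ) (x : ℂ)

noncomputable def gevreyMajorant (r : ℕ) : ℝ :=
  D ^ r * ((k + a * r)! : ℝ) ^ s / ‖(descPochhammer ℂ (b * (r + 1))).eval x‖

noncomputable def gevreyRatio (r : ℕ) : ℝ :=
  |D| * (((k + a : ℕ) : ℝ) * (r + 1)) ^ (a * s) / ((b : ℝ) * (r + 1) / 2) ^ b

variable {a b k s D x}

theorem norm_gevreyMajorant_succ_le (hb : 0 < b) (hs : 0 ≤ s) (hx : ∀ j : ℕ, x ≠ j) {r : ℕ}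
    (hr : ‖x‖ ≤ b * (r + 1) / 2) :
    ‖gevreyMajorant a b k s D x (r + 1)‖ ≤
      gevreyRatio a b k s D r * ‖gevreyMajorant a b k s D x r‖ := by
  have hP := half_pow_mul_norm_descPochhammer_eval_le (m := b * (r + 1)) (x := x)
    (by push_cast; linarith) b
  rw [← mul_add_one] at hP
  have hpos : 0 < ‖(descPochhammer ℂ (b * (r + 1))).eval x‖ :=
    norm_pos_iff.2 (descPochhammer_eval_ne_zero hx _)
  simp only [gevreyMajorant, norm_div, norm_mul, norm_pow, Real.norm_eq_abs,
    abs_of_nonneg (Real.rpow_nonneg (Nat.cast_nonneg _) s), abs_norm]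
  push_cast at hP
  calc |D| ^ (r + 1) * ((k + a * (r + 1))! : ℝ) ^ s /
        ‖(descPochhammer ℂ (b * (r + 1 + 1))).eval x‖
      ≤ |D| ^ (r + 1) * (((k + a * r)! : ℝ) ^ s * (((k + a : ℕ) : ℝ) * (r + 1)) ^ (a * s)) /
          (((b : ℝ) * (r + 1) / 2) ^ b * ‖(descPochhammer ℂ (b * (r + 1))).eval x‖) := by
        gcongr
        exact factorial_add_mul_succ_rpow_le a k hs r
    _ = _ := by rw [gevreyRatio]; field_simp; ring

theorem tendsto_gevreyRatio_atTop_zero (hsb : a * s < b) :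
    Tendsto (gevreyRatio a b k s D) atTop (𝓝 0) := by
  have hlim : Tendsto (fun r : ℕ ↦ ((r : ℝ) + 1) ^ (-(b - a * s))) atTop (𝓝 0) :=
    (tendsto_rpow_neg_atTop (by linarith)).comp
      (tendsto_natCast_atTop_atTop.atTop_add tendsto_const_nhds)
  convert hlim.const_mul (|D| * ((k + a : ℕ) : ℝ) ^ (a * s) / ((b : ℝ) / 2) ^ b) using 2 with r
  · have hr : (0 : ℝ) < r + 1 := by positivity
    rw [gevreyRatio, neg_sub, Real.rpow_sub hr, Real.rpow_natCast,
      Real.mul_rpow (by positivity) hr.le,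
      show (b : ℝ) * (r + 1) / 2 = b / 2 * (r + 1) by ring, mul_pow]
    ring
  · simp

theorem summable_gevreyMajorant (hs : 0 ≤ s) (hsb : a * s < b) (hx : ∀ j : ℕ, x ≠ j) :
    Summable (gevreyMajorant a b k s D x) := by
  have hb : 0 < b := by
    have : (0 : ℝ) < b := by nlinarith [(a.cast_nonneg : (0 : ℝ) ≤ a)]
    exact_mod_cast this
  refine summable_of_norm_succ_le_mul_of_tendsto_zero
    (tendsto_gevreyRatio_atTop_zero (k := k) (D := D) hsb) ?_
  filter_upwards [tendsto_natCast_atTop_atTop.eventually_ge_atTop (2 * ‖x‖)] with r hr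
  exact norm_gevreyMajorant_succ_le hb hs hx (by nlinarith [(Nat.one_le_cast (α := ℝ)).2 hb])

end GevreyMajorant

theorem lambda_k_series_converges_general
    (a b : ℕ) (ha : 0 < a)
    (β : ℂ) (k : ℕ)
    (hβ : ∀ n : ℕ, (β - (b : ℂ) * (k : ℂ)) / (a : ℂ) ≠ (n : ℂ))
    (s : ℝ) (hs1 : 1 ≤ s) (hs2 : s < (b : ℝ) / (a : ℝ))
    (f : ℕ → ℂ) (C D : ℝ)
    (hf : ∀ r : ℕ, ‖f r‖ ≤ C * D ^ r * (((k + a * r).factorial : ℝ)) ^ (s - 1)) :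
    (∀ r : ℕ,
      (descPochhammer ℂ (b * (r + 1))).eval ((β - (b : ℂ) * (k : ℂ)) / (a : ℂ)) ≠ 0) ∧
    Summable fun r : ℕ => ‖
      (((k + a * r).factorial : ℂ) * f r /
        (descPochhammer ℂ (b * (r + 1))).eval ((β - (b : ℂ) * (k : ℂ)) / (a : ℂ)))‖ := by
  set x := (β - (b : ℂ) * (k : ℂ)) / (a : ℂ)
  refine ⟨fun r ↦ descPochhammer_eval_ne_zero hβ _, ?_⟩
  have hsb : (a : ℝ) * s < b := by rwa [lt_div_iff₀ (by exact_mod_cast ha), mul_comm] at hs2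
  have hmaj := (summable_gevreyMajorant (k := k) (D := D) (by linarith) hsb hβ).mul_left C
  refine hmaj.of_nonneg_of_le (fun _ ↦ norm_nonneg _) fun r ↦ ?_
  have hF : (0 : ℝ) < (k + a * r)! := by positivity
  calc ‖((k + a * r)! : ℂ) * f r / (descPochhammer ℂ (b * (r + 1))).eval x‖
      = ((k + a * r)! : ℝ) * ‖f r‖ / ‖(descPochhammer ℂ (b * (r + 1))).eval x‖ := by
        rw [norm_div, norm_mul, Complex.norm_natCast]
    _ ≤ ((k + a * r)! : ℝ) * (C * D ^ r * ((k + a * r)! : ℝ) ^ (s - 1)) /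
          ‖(descPochhammer ℂ (b * (r + 1))).eval x‖ := by
        gcongr; exact hf r
    _ = C * gevreyMajorant a b k s D x r := by
        rw [gevreyMajorant, Real.rpow_sub_one hF.ne']
        field_simp

/-- For `(β - bk)/a ∉ ℕ` and `1 ≤ s < b/a`, if `|f_r| ≤ C·D^r·((k+ar)!)^{s-1}`, then all the
Pochhammer values `((β - bk)/a)_{b(r+1)}` are nonzero and the series
`Σ_r (k+ar)!·f_r / ((β - bk)/a)_{b(r+1)}` converges absolutely. -/
theorem lambda_k_series_converges
    (a b : ℕ) (hab : Nat.Coprime a b) (ha : 0 < a) (haltb : a < b)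
    (β : ℂ) (k : ℕ) (hk : k < a)
    (hβ : ∀ n : ℕ, (β - (b : ℂ) * (k : ℂ)) / (a : ℂ) ≠ (n : ℂ))
    (s : ℝ) (hs1 : 1 ≤ s) (hs2 : s < (b : ℝ) / (a : ℝ))
    (f : ℕ → ℂ) (C D : ℝ) (hC : 0 < C) (hD : 0 < D)
    (hf : ∀ r : ℕ, ‖f r‖ ≤ C * D ^ r * (((k + a * r).factorial : ℝ)) ^ (s - 1)) :
    (∀ r : ℕ,
      (descPochhammer ℂ (b * (r + 1))).eval ((β - (b : ℂ) * (k : ℂ)) / (a : ℂ)) ≠ 0) ∧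
    Summable fun r : ℕ => ‖
      (((k + a * r).factorial : ℂ) * f r /
        (descPochhammer ℂ (b * (r + 1))).eval ((β - (b : ℂ) * (k : ℂ)) / (a : ℂ)))‖ :=
  lambda_k_series_converges_general a b ha β k hβ s hs1 hs2 f C D hf
end
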